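/- arXiv:2205.09095 — 7 statements merged into one kernel-verified Lean document; each statement's English description precedes it below -/
import Mathlib

section
/- Let γ > 0, B > 0, m < M be real numbers, and let (θ_t)_{t≥1} be a real sequence satisfying θ_{t+1} = θ_t + γ(l_t − r) where l_t ∈ [−B, B] are arbitrary real numbers, r ∈ [−B, B], and θ_1 ∈ [m − 2γB, M + 2γB]. Assume that whenever θ_t > M we have l_t < r, and whenever θ_t < m we have l_t > r. Then for all t ≥ 1, θ_t ∈ [m − 2γB, M + 2γB]. -/
/-! Once `θ` lies above `M` the update pushes it down, and once it lies below `m` it pushes it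
up; since a single step moves `θ` by at most `2γB`, it can only overshoot `[m, M]` by that much. -/

open Set

theorem add_mem_Icc_of_restoring_step {α : Type*} [AddCommGroup α] [LinearOrder α]
    [IsOrderedAddMonoid α] {a b δ x s : α} (hx : x ∈ Icc (a - δ) (b + δ))
    (hs : |s| ≤ δ) (hhigh : b < x → s ≤ 0) (hlow : x < a → 0 ≤ s) :
    x + s ∈ Icc (a - δ) (b + δ) := by
  obtain ⟨hxa, hxb⟩ := hx
  obtain ⟨hsl, hsu⟩ := abs_le.mp hs
  constructor
  · rcases lt_or_ge x a with h | h
    · calc a - δ ≤ x := hxa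
        _ ≤ x + s := le_add_of_nonneg_right (hlow h)
    · calc a - δ = a + -δ := sub_eq_add_neg a δ
        _ ≤ x + s := add_le_add h hsl
  · rcases lt_or_ge b x with h | h
    · calc x + s ≤ x := add_le_of_nonpos_right (hhigh h)
        _ ≤ b + δ := hxb
    · exact add_le_add h hsu

theorem rolling_rc_theta_bounded_general
    (γ B m M r : ℝ) (θ l : ℕ → ℝ)
    (hγ : 0 < γ)
    (hupd : ∀ t, θ (t + 1) = θ t + γ * (l t - r))
    (hl : ∀ t, l t ∈ Set.Icc (-B) B)
    (hr : r ∈ Set.Icc (-B) B)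
    (hinit : θ 0 ∈ Set.Icc (m - 2 * γ * B) (M + 2 * γ * B))
    (hhigh : ∀ t, θ t > M → l t < r)
    (hlow : ∀ t, θ t < m → l t > r) :
    ∀ t, θ t ∈ Set.Icc (m - 2 * γ * B) (M + 2 * γ * B) := by
  intro t
  induction t with
  | zero => exact hinit
  | succ t ih =>
    have hstep : |γ * (l t - r)| ≤ 2 * γ * B :=
      calc |γ * (l t - r)| = γ * |l t - r| := by rw [abs_mul, abs_of_pos hγ]
        _ ≤ γ * (B - -B) := by
          gcongr
          exact abs_sub_le_of_le_of_le (hl t).1 (hl t).2 hr.1 hr.2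
        _ = 2 * γ * B := by ring
    rw [hupd t]
    exact add_mem_Icc_of_restoring_step ih hstep
      (fun h => mul_nonpos_of_nonneg_of_nonpos hγ.le (sub_nonpos.mpr (hhigh t h).le))
      (fun h => mul_nonneg hγ.le (sub_nonneg.mpr (hlow t h).le))

/-- Boundedness lemma for the Rolling RC update rule. Indices start at 0,
with `θ 0` playing the role of `θ₁`. -/
theorem rolling_rc_theta_bounded
    (γ B m M r : ℝ) (θ l : ℕ → ℝ)
    (hγ : 0 < γ) (hB : 0 < B) (hmM : m < M)
    (hupd : ∀ t, θ (t + 1) = θ t + γ * (l t - r))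
    (hl : ∀ t, l t ∈ Set.Icc (-B) B)
    (hr : r ∈ Set.Icc (-B) B)
    (hinit : θ 0 ∈ Set.Icc (m - 2 * γ * B) (M + 2 * γ * B))
    (hhigh : ∀ t, θ t > M → l t < r)
    (hlow : ∀ t, θ t < m → l t > r) :
    ∀ t, θ t ∈ Set.Icc (m - 2 * γ * B) (M + 2 * γ * B) :=
  rolling_rc_theta_bounded_general γ B m M r θ l hγ hupd hl hr hinit hhigh hlow
end

section
/- Let γ > 0 and m' ≤ M' be real numbers, and let (θ_t)_{t≥1} be a real sequence with θ_{t+1} = θ_t + γ(l_t − r) for real numbers l_t and r. If θ_t ∈ [m', M'] for all t ≥ 1, then for every T ≥ 1, |(1/T) Σ_{t=1}^T (l_t − r)| ≤ max{θ_1 − m', M' − θ_1} / (T γ). Consequently, (1/T) Σ_{t=1}^T l_t → r as T → ∞. -/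
open Filter

/-!
Telescoping the update gives `θ_T - θ_1 = γ ∑_{t<T} (l_t - r)`, so boundedness of `θ` bounds the
partial sums of `l_t - r` by `max (θ_1 - m') (M' - θ_1) / γ` uniformly in `T`; dividing by `T`
gives the `1/T` rate, and hence the convergence of the average loss to `r`.
-/

open Finset

theorem abs_sub_le_max_of_mem_Icc {a b x : ℝ} (y : ℝ) (hx : x ∈ Set.Icc a b) :
    |x - y| ≤ max (y - a) (b - y) :=
  abs_sub_le_iff.2
    ⟨(sub_le_sub_right hx.2 y).trans (le_max_right _ _),
      (sub_le_sub_left hx.1 y).trans (le_max_left _ _)⟩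

theorem mul_sum_range_eq_sub_of_update {K : Type*} [CommRing K] {γ : K} {θ a : ℕ → K}
    (hupd : ∀ t, θ (t + 1) = θ t + γ * a t) (T : ℕ) :
    γ * ∑ t ∈ range T, a t = θ T - θ 0 := by
  rw [mul_sum, ← sum_range_sub θ T]
  exact sum_congr rfl fun t _ => by rw [hupd t]; ring

theorem abs_sum_range_le_of_update {γ m M : ℝ} {θ a : ℕ → ℝ} (hγ : 0 < γ)
    (hupd : ∀ t, θ (t + 1) = θ t + γ * a t) (hbdd : ∀ t, θ t ∈ Set.Icc m M) (T : ℕ) :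
    |∑ t ∈ range T, a t| ≤ max (θ 0 - m) (M - θ 0) / γ := by
  rw [le_div_iff₀ hγ, ← abs_of_pos hγ, ← abs_mul, mul_comm,
    mul_sum_range_eq_sub_of_update hupd]
  exact abs_sub_le_max_of_mem_Icc (θ 0) (hbdd T)

theorem abs_average_le_of_abs_sum_le {a : ℕ → ℝ} {B : ℝ} {T : ℕ} (hT : 1 ≤ T)
    (h : |∑ t ∈ range T, a t| ≤ B) :
    |(1 / (T : ℝ)) * ∑ t ∈ range T, a t| ≤ B / T := by
  have hT : (0 : ℝ) < T := by exact_mod_cast hT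
  rw [abs_mul, abs_of_pos (one_div_pos.2 hT), one_div_mul_eq_div]
  exact div_le_div_of_nonneg_right h hT.le

theorem tendsto_average_of_abs_sum_sub_le {a : ℕ → ℝ} {r B : ℝ}
    (h : ∀ T, |∑ t ∈ range T, (a t - r)| ≤ B) :
    Tendsto (fun T : ℕ => (1 / (T : ℝ)) * ∑ t ∈ range T, a t) atTop (nhds r) := by
  have hdev : Tendsto (fun T : ℕ => (1 / (T : ℝ)) * ∑ t ∈ range T, (a t - r)) atTop (nhds 0) :=
    squeeze_zero_norm' (eventually_atTop.2 ⟨1, fun T hT => abs_average_le_of_abs_sum_le hT (h T)⟩)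
      (tendsto_const_div_atTop_nhds_zero_nat B)
  refine (hdev.add_const r).congr' ?_ |>.mono_right (by rw [zero_add])
  filter_upwards [eventually_ge_atTop 1] with T hT
  have hT : (T : ℝ) ≠ 0 := by positivity
  rw [sum_sub_distrib, sum_const, card_range, nsmul_eq_mul]
  field_simp
  ring

/-- Indices start at 0, with `θ 0` playing the role of `θ₁` and the sum
`∑ t in Finset.range T, l t` playing the role of `∑_{t=1}^T l_t`. -/
theorem rolling_rc_risk_control_general
    (γ m' M' r : ℝ) (θ l : ℕ → ℝ)
    (hγ : 0 < γ)
    (hupd : ∀ t, θ (t + 1) = θ t + γ * (l t - r))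
    (hbdd : ∀ t, θ t ∈ Set.Icc m' M') :
    (∀ T : ℕ, 1 ≤ T →
      |(1 / (T : ℝ)) * ∑ t ∈ Finset.range T, (l t - r)| ≤
        max (θ 0 - m') (M' - θ 0) / ((T : ℝ) * γ)) ∧
    Tendsto (fun T : ℕ => (1 / (T : ℝ)) * ∑ t ∈ Finset.range T, l t)
      atTop (nhds r) := by
  have hsum := abs_sum_range_le_of_update hγ hupd hbdd
  refine ⟨fun T hT => ?_, tendsto_average_of_abs_sum_sub_le hsum⟩
  rw [mul_comm (T : ℝ) γ, ← div_div]
  exact abs_average_le_of_abs_sum_le hT (hsum T)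

/-- Core risk-control result: bounded calibration parameter implies the
average loss converges to the nominal level `r`, with a `1/T` bound.
Indices start at 0, with `θ 0` playing the role of `θ₁` and the sum
`∑ t in Finset.range T, l t` playing the role of `∑_{t=1}^T l_t`. -/
theorem rolling_rc_risk_control
    (γ m' M' r : ℝ) (θ l : ℕ → ℝ)
    (hγ : 0 < γ) (hm'M' : m' ≤ M')
    (hupd : ∀ t, θ (t + 1) = θ t + γ * (l t - r))
    (hbdd : ∀ t, θ t ∈ Set.Icc m' M') :
    (∀ T : ℕ, 1 ≤ T →
      |(1 / (T : ℝ)) * ∑ t ∈ Finset.range T, (l t - r)| ≤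
        max (θ 0 - m') (M' - θ 0) / ((T : ℝ) * γ)) ∧
    Tendsto (fun T : ℕ => (1 / (T : ℝ)) * ∑ t ∈ Finset.range T, l t)
      atTop (nhds r) :=
  rolling_rc_risk_control_general γ m' M' r θ l hγ hupd hbdd
end

section
/- Fix k ≥ 1, and for each i ∈ {1,…,k} let γ^i > 0, B > 0, M ∈ ℝ, and let (θ^i_t)_{t≥1} be real sequences with θ^i_{t+1} = θ^i_t + γ^i (l^i_t − r^i), where l^i_t, r^i ∈ [−B, B]. Assume θ^i_1 ≤ M + 2γ^i B for all i, and assume that whenever θ^i_t > M for some i, then l^j_t < r^j for all j ∈ {1,…,k}. Then for each i, θ^i_t ≤ M + 2γ^i B for all t, and for every T ≥ 1, (1/T) Σ_{t=1}^T l^i_t ≤ r^i + (M + 2γ^i B − θ^i_1)/(T γ^i). In particular, limsup_{T→∞} (1/T) Σ_{t=1}^T l^i_t ≤ r^i for every i. -/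
/-!
Each coordinate is controlled separately. Above `M` the loss of every risk is below its
level, so `θ i` decreases there; from at most `M` a single step raises it by at most
`2 γ i B`. Hence `θ i` stays below `M + 2 γ i B`. Telescoping the update rule turns this into
`θ i 0 + γ i ∑ (l i t - r i) ≤ M + 2 γ i B`, which after division by `T γ i` is the averaged
bound, and that bound tends to `r i`.
-/

open Filter Finset Topology

theorem Filter.limsup_le_of_eventually_le_of_tendsto {α β : Type*}
    [ConditionallyCompleteLinearOrder β] [TopologicalSpace β] [OrderTopology β]
    {f : Filter α} [f.NeBot] {u v : α → β} {a : β} (hu : IsBoundedUnder (· ≥ ·) f u) (huv : u ≤ᶠ[f] v)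
    (hv : Tendsto v f (𝓝 a)) : limsup u f ≤ a :=
  hv.limsup_eq ▸ limsup_le_limsup huv hu.isCoboundedUnder_le hv.isBoundedUnder_le

theorem le_average_range {l : ℕ → ℝ} {a : ℝ} (hl : ∀ t, a ≤ l t) {T : ℕ} (hT : 1 ≤ T) :
    a ≤ (1 / (T : ℝ)) * ∑ t ∈ range T, l t := by
  have hT' : (0 : ℝ) < T := by exact_mod_cast hT
  have hsum := card_nsmul_le_sum (range T) l a fun t _ ↦ hl t
  rw [card_range, nsmul_eq_mul] at hsum
  rw [one_div_mul_eq_div, le_div_iff₀ hT']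
  linarith

section RollingUpdate

variable {θ l : ℕ → ℝ} {γ r : ℝ}

theorem rolling_update_eq_add_sum (hupd : ∀ t, θ (t + 1) = θ t + γ * (l t - r)) (T : ℕ) :
    θ T = θ 0 + γ * ∑ t ∈ range T, (l t - r) := by
  have := sum_range_sub θ T
  simp only [hupd, add_sub_cancel_left] at this
  rw [mul_sum, this]
  ring

theorem rolling_update_le (hupd : ∀ t, θ (t + 1) = θ t + γ * (l t - r)) (hγ : 0 ≤ γ)
    {B M : ℝ} (hl : ∀ t, l t ≤ B) (hr : -B ≤ r) (hinit : θ 0 ≤ M + 2 * γ * B)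
    (hhigh : ∀ t, M < θ t → l t < r) (t : ℕ) : θ t ≤ M + 2 * γ * B := by
  induction t with
  | zero => exact hinit
  | succ t ih =>
    rw [hupd t]
    rcases lt_or_ge M (θ t) with hθ | hθ
    · have : γ * (l t - r) ≤ 0 :=
        mul_nonpos_of_nonneg_of_nonpos hγ (by linarith [hhigh t hθ])
      linarith
    · have : γ * (l t - r) ≤ γ * (2 * B) :=
        mul_le_mul_of_nonneg_left (by linarith [hl t]) hγ
      linarith

theorem average_le_of_rolling_update_le (hupd : ∀ t, θ (t + 1) = θ t + γ * (l t - r))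
    (hγ : 0 < γ) {C : ℝ} {T : ℕ} (hθ : θ T ≤ C) (hT : 1 ≤ T) :
    (1 / (T : ℝ)) * ∑ t ∈ range T, l t ≤ r + (C - θ 0) / ((T : ℝ) * γ) := by
  have hT' : (0 : ℝ) < T := by exact_mod_cast hT
  have hsum : γ * (∑ t ∈ range T, l t - T * r) ≤ C - θ 0 := by
    rw [rolling_update_eq_add_sum hupd, sum_sub_distrib, sum_const, card_range,
      nsmul_eq_mul] at hθ
    linarith
  have hrhs : (r + (C - θ 0) / (T * γ)) * T = T * r + (C - θ 0) / γ := by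
    field_simp
  rw [one_div_mul_eq_div, div_le_iff₀ hT', hrhs, ← sub_le_iff_le_add', le_div_iff₀ hγ]
  linarith

theorem tendsto_add_div_mul_atTop (hγ : 0 < γ) (D : ℝ) :
    Tendsto (fun T : ℕ ↦ r + D / ((T : ℝ) * γ)) atTop (𝓝 r) := by
  have hden : Tendsto (fun T : ℕ ↦ (T : ℝ) * γ) atTop atTop :=
    tendsto_natCast_atTop_atTop.atTop_mul_const hγ
  simpa using tendsto_const_nhds.add (tendsto_const_nhds.div_atTop hden)

end RollingUpdate

theorem rolling_rc_multiple_risks_general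
    (k : ℕ)
    (γ r : Fin k → ℝ) (B M : ℝ)
    (θ l : Fin k → ℕ → ℝ)
    (hγ : ∀ i, 0 < γ i)
    (hupd : ∀ i t, θ i (t + 1) = θ i t + γ i * (l i t - r i))
    (hl : ∀ i t, l i t ∈ Set.Icc (-B) B)
    (hr : ∀ i, r i ∈ Set.Icc (-B) B)
    (hinit : ∀ i, θ i 0 ≤ M + 2 * γ i * B)
    (hhigh : ∀ t, (∃ i, θ i t > M) → ∀ j, l j t < r j) :
    (∀ i t, θ i t ≤ M + 2 * γ i * B) ∧
    (∀ i, ∀ T : ℕ, 1 ≤ T →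
      (1 / (T : ℝ)) * ∑ t ∈ Finset.range T, l i t ≤
        r i + (M + 2 * γ i * B - θ i 0) / ((T : ℝ) * γ i)) ∧
    (∀ i, limsup (fun T : ℕ => (1 / (T : ℝ)) * ∑ t ∈ Finset.range T, l i t)
        atTop ≤ r i) := by
  have hbound : ∀ i t, θ i t ≤ M + 2 * γ i * B := fun i ↦
    rolling_update_le (hupd i) (hγ i).le (fun t ↦ (hl i t).2) (hr i).1 (hinit i)
      fun t hθ ↦ hhigh t ⟨i, hθ⟩ i
  have havg : ∀ i, ∀ T : ℕ, 1 ≤ T →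
      (1 / (T : ℝ)) * ∑ t ∈ range T, l i t ≤
        r i + (M + 2 * γ i * B - θ i 0) / ((T : ℝ) * γ i) := fun i T ↦
    average_le_of_rolling_update_le (hupd i) (hγ i) (hbound i T)
  refine ⟨hbound, havg, fun i ↦ ?_⟩
  have hbdd := isBoundedUnder_of_eventually_ge <|
    eventually_atTop.2 ⟨1, fun T hT ↦ le_average_range (fun t ↦ (hl i t).1) hT⟩
  exact limsup_le_of_eventually_le_of_tendsto hbdd (eventually_atTop.2 ⟨1, havg i⟩)
    (tendsto_add_div_mul_atTop (hγ i) _)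

/-- Multiple risk control (Theorem 2): with coordinatewise updates, all
long-run risks are asymptotically bounded by the nominal levels.
Indices start at 0, with `θ i 0` playing the role of `θ^i₁`. -/
theorem rolling_rc_multiple_risks
    (k : ℕ) (hk : 1 ≤ k)
    (γ r : Fin k → ℝ) (B M : ℝ)
    (θ l : Fin k → ℕ → ℝ)
    (hγ : ∀ i, 0 < γ i) (hB : 0 < B)
    (hupd : ∀ i t, θ i (t + 1) = θ i t + γ i * (l i t - r i))
    (hl : ∀ i t, l i t ∈ Set.Icc (-B) B)
    (hr : ∀ i, r i ∈ Set.Icc (-B) B)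
    (hinit : ∀ i, θ i 0 ≤ M + 2 * γ i * B)
    (hhigh : ∀ t, (∃ i, θ i t > M) → ∀ j, l j t < r j) :
    (∀ i t, θ i t ≤ M + 2 * γ i * B) ∧
    (∀ i, ∀ T : ℕ, 1 ≤ T →
      (1 / (T : ℝ)) * ∑ t ∈ Finset.range T, l i t ≤
        r i + (M + 2 * γ i * B - θ i 0) / ((T : ℝ) * γ i)) ∧
    (∀ i, limsup (fun T : ℕ => (1 / (T : ℝ)) * ∑ t ∈ Finset.range T, l i t)
        atTop ≤ r i) :=
  rolling_rc_multiple_risks_general k γ r B M θ l hγ hupd hl hr hinit hhigh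
end

section
/- Fix k ≥ 1, and for each i ∈ {1,…,k} let γ^i > 0, B > 0, m < M real numbers, and (θ^i_t)_{t≥1} sequences with θ^i_{t+1} = θ^i_t + γ^i (l^i_t − r^i), l^i_t, r^i ∈ [−B, B], and θ^i_1 ∈ [m − 2γ^i B, M + 2γ^i B]. Assume: if θ^i_t > M for some i then l^j_t < r^j for all j, and if θ^i_t < m for some i then l^j_t > r^j for all j. Then θ^i_t ∈ [m − 2γ^i B, M + 2γ^i B] for all t and i, and for every i, lim_{T→∞} (1/T) Σ_{t=1}^T l^i_t = r^i. -/
/-!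
Each update moves `θ^i` by at most `2γ^i B`, and whenever `θ^i` has left `[m, M]` the boundary
conditions force the next step back towards that interval; hence `θ^i` never leaves
`[m - 2γ^i B, M + 2γ^i B]`. Telescoping the update rule gives
`∑_{t<T} (l^i_t - r^i) = (θ^i_T - θ^i_0) / γ^i`, which is bounded, so its average tends to zero.
-/

open Filter Topology Finset Bornology

theorem add_mul_sub_mem_Icc {θ γ l r m M B : ℝ} (hγ : 0 ≤ γ)
    (hl : l ∈ Set.Icc (-B) B) (hr : r ∈ Set.Icc (-B) B)
    (hhigh : M < θ → l < r) (hlow : θ < m → r < l)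
    (hθ : θ ∈ Set.Icc (m - 2 * γ * B) (M + 2 * γ * B)) :
    θ + γ * (l - r) ∈ Set.Icc (m - 2 * γ * B) (M + 2 * γ * B) := by
  obtain ⟨hl₁, hl₂⟩ := hl
  obtain ⟨hr₁, hr₂⟩ := hr
  obtain ⟨hθ₁, hθ₂⟩ := hθ
  constructor
  · rcases lt_or_ge θ m with hθm | hθm
    · nlinarith [hlow hθm]
    · nlinarith
  · rcases lt_or_ge M θ with hθM | hθM
    · nlinarith [hhigh hθM]
    · nlinarith

theorem tendsto_average_nhds_zero_of_isBounded_partialSums {y : ℕ → ℝ}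
    (h : IsBounded (Set.range fun T => ∑ t ∈ range T, y t)) :
    Tendsto (fun T : ℕ => (1 / (T : ℝ)) * ∑ t ∈ range T, y t) atTop (𝓝 0) := by
  obtain ⟨C, hC⟩ := isBounded_iff_forall_norm_le.1 h
  exact tendsto_one_div_atTop_nhds_zero_nat.zero_mul_isBoundedUnder_le
    (isBoundedUnder_of ⟨C, fun T => hC _ ⟨T, rfl⟩⟩)

theorem tendsto_average_of_isBounded_of_step {θ x : ℕ → ℝ} {γ c : ℝ} (hγ : γ ≠ 0)
    (hstep : ∀ t, θ (t + 1) = θ t + γ * (x t - c)) (hθ : IsBounded (Set.range θ)) :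
    Tendsto (fun T : ℕ => (1 / (T : ℝ)) * ∑ t ∈ range T, x t) atTop (𝓝 c) := by
  have hsum (T : ℕ) : ∑ t ∈ range T, (x t - c) = γ⁻¹ * (θ T - θ 0) := by
    rw [← sum_range_sub, mul_sum]
    refine sum_congr rfl fun t _ => ?_
    rw [hstep]
    field_simp
    ring
  have hbdd : IsBounded (Set.range fun T => ∑ t ∈ range T, (x t - c)) := by
    obtain ⟨C, hC⟩ := isBounded_iff_forall_norm_le.1 hθ
    refine isBounded_iff_forall_norm_le.2 ⟨|γ⁻¹| * (C + C), ?_⟩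
    rintro _ ⟨T, rfl⟩
    simp only [hsum, norm_mul, Real.norm_eq_abs]
    gcongr
    exact (norm_sub_le _ _).trans (add_le_add (hC _ ⟨T, rfl⟩) (hC _ ⟨0, rfl⟩))
  have hmean : ∀ᶠ T : ℕ in atTop,
      c + (1 / (T : ℝ)) * ∑ t ∈ range T, (x t - c) = (1 / (T : ℝ)) * ∑ t ∈ range T, x t := by
    filter_upwards [eventually_ne_atTop 0] with T hT
    rw [sum_sub_distrib, sum_const, card_range, nsmul_eq_mul]
    field_simp
    ring
  simpa using
    ((tendsto_average_nhds_zero_of_isBounded_partialSums hbdd).const_add c).congr' hmean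

theorem rolling_rc_exact_multiple_risks_general
    (k : ℕ)
    (γ r : Fin k → ℝ) (B m M : ℝ)
    (θ l : Fin k → ℕ → ℝ)
    (hγ : ∀ i, 0 < γ i)
    (hupd : ∀ i t, θ i (t + 1) = θ i t + γ i * (l i t - r i))
    (hl : ∀ i t, l i t ∈ Set.Icc (-B) B)
    (hr : ∀ i, r i ∈ Set.Icc (-B) B)
    (hinit : ∀ i, θ i 0 ∈ Set.Icc (m - 2 * γ i * B) (M + 2 * γ i * B))
    (hhigh : ∀ t, (∃ i, θ i t > M) → ∀ j, l j t < r j)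
    (hlow : ∀ t, (∃ i, θ i t < m) → ∀ j, l j t > r j) :
    (∀ i t, θ i t ∈ Set.Icc (m - 2 * γ i * B) (M + 2 * γ i * B)) ∧
    (∀ i, Tendsto (fun T : ℕ => (1 / (T : ℝ)) * ∑ t ∈ Finset.range T, l i t)
        atTop (nhds (r i))) := by
  have hband : ∀ i t, θ i t ∈ Set.Icc (m - 2 * γ i * B) (M + 2 * γ i * B) := by
    intro i t
    induction t with
    | zero => exact hinit i
    | succ t ih =>
      rw [hupd]
      exact add_mul_sub_mem_Icc (hγ i).le (hl i t) (hr i)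
        (fun h => hhigh t ⟨i, h⟩ i) (fun h => hlow t ⟨i, h⟩ i) ih
  refine ⟨hband, fun i => tendsto_average_of_isBounded_of_step (hγ i).ne' (hupd i) ?_⟩
  exact (Metric.isBounded_Icc _ _).subset (Set.range_subset_iff.2 (hband i))

/-- Exact multiple risk control (Theorem 3): with two-sided boundary
conditions, every long-run empirical risk converges exactly to its
nominal level. Indices start at 0, with `θ i 0` playing the role of `θ^i₁`. -/
theorem rolling_rc_exact_multiple_risks
    (k : ℕ) (hk : 1 ≤ k)
    (γ r : Fin k → ℝ) (B m M : ℝ)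
    (θ l : Fin k → ℕ → ℝ)
    (hγ : ∀ i, 0 < γ i) (hB : 0 < B) (hmM : m < M)
    (hupd : ∀ i t, θ i (t + 1) = θ i t + γ i * (l i t - r i))
    (hl : ∀ i t, l i t ∈ Set.Icc (-B) B)
    (hr : ∀ i, r i ∈ Set.Icc (-B) B)
    (hinit : ∀ i, θ i 0 ∈ Set.Icc (m - 2 * γ i * B) (M + 2 * γ i * B))
    (hhigh : ∀ t, (∃ i, θ i t > M) → ∀ j, l j t < r j)
    (hlow : ∀ t, (∃ i, θ i t < m) → ∀ j, l j t > r j) :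
    (∀ i t, θ i t ∈ Set.Icc (m - 2 * γ i * B) (M + 2 * γ i * B)) ∧
    (∀ i, Tendsto (fun T : ℕ => (1 / (T : ℝ)) * ∑ t ∈ Finset.range T, l i t)
        atTop (nhds (r i))) :=
  rolling_rc_exact_multiple_risks_general k γ r B m M θ l hγ hupd hl hr hinit hhigh hlow
end

section
/- Let 0 < α < 1 and B ≥ 1/(1−α) be given. In the setting of Rolling RC with the truncated miscoverage-counter loss l_t = min{MC_t, B} ∈ [0, B], target level r = α/(1−α), step size γ > 0, and update θ_{t+1} = θ_t + γ(l_t − r), suppose the θ-sequence remains in a bounded interval [m', M']. Then limsup_{T→∞} (1/T) Σ_{t=1}^T 1{Y_t ∉ Ĉ_t(X_t)} ≤ α/(1−α), i.e., controlling the truncated MC risk at level α/(1−α) controls the long-run miscoverage rate at level α/(1−α). -/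
/-!
Summing the update telescopes: `γ ∑_{t ≤ T} (l t - r) = θ (T + 1) - θ 1 ≤ M' - m'`, so the average
loss is at most `r + O(1/T)`. A miss makes the counter at least `1`, and `B ≥ 1 / (1 - α) ≥ 1`,
so the miscoverage indicator is dominated by the truncated counter loss.
-/

open Filter Finset

section RollingUpdate

variable {γ r m' M' : ℝ} {l θ : ℕ → ℝ}

lemma rolling_update_telescope (hupd : ∀ t, 1 ≤ t → θ (t + 1) = θ t + γ * (l t - r)) (T : ℕ) :
    θ (T + 1) = θ 1 + γ * ∑ t ∈ Icc 1 T, (l t - r) := by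
  induction T with
  | zero => simp
  | succ n ih =>
    rw [sum_Icc_succ_top (by omega), hupd (n + 1) (by omega), ih]
    ring

lemma sum_le_of_rolling_update_mem_Icc (hγ : 0 < γ)
    (hupd : ∀ t, 1 ≤ t → θ (t + 1) = θ t + γ * (l t - r))
    (hbdd : ∀ t, 1 ≤ t → θ t ∈ Set.Icc m' M') (T : ℕ) :
    ∑ t ∈ Icc 1 T, l t ≤ (M' - m') / γ + T * r := by
  have hexcess : ∑ t ∈ Icc 1 T, (l t - r) ≤ (M' - m') / γ := by
    rw [le_div_iff₀' hγ]
    linarith [rolling_update_telescope hupd T, (hbdd (T + 1) (by omega)).2, (hbdd 1 le_rfl).1]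
  rw [sum_sub_distrib, sum_const, Nat.card_Icc, nsmul_eq_mul] at hexcess
  push_cast at hexcess
  linarith

end RollingUpdate

section MiscoverageCounter

variable {e MC : ℕ → ℝ}

lemma miscoverage_counter_nonneg (hMC0 : MC 0 = 0)
    (hMC : ∀ t, 1 ≤ t → MC t = if e t = 1 then MC (t - 1) + 1 else 0) (t : ℕ) : 0 ≤ MC t := by
  induction t with
  | zero => exact hMC0.ge
  | succ n ih =>
    rw [hMC (n + 1) (by omega), Nat.add_sub_cancel]
    split_ifs
    · linarith
    · exact le_rfl

lemma le_min_miscoverage_counter {B : ℝ} (hB : 1 ≤ B)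
    (he : ∀ t, 1 ≤ t → e t ∈ ({0, 1} : Set ℝ)) (hMC0 : MC 0 = 0)
    (hMC : ∀ t, 1 ≤ t → MC t = if e t = 1 then MC (t - 1) + 1 else 0)
    {t : ℕ} (ht : 1 ≤ t) : e t ≤ min (MC t) B := by
  have hMC_nonneg := miscoverage_counter_nonneg hMC0 hMC
  rcases he t ht with h0 | h1
  · rw [h0]
    exact le_min (hMC_nonneg t) (by linarith)
  · rw [Set.mem_singleton_iff] at h1
    have hstep : MC t = MC (t - 1) + 1 := by rw [hMC t ht, if_pos h1]
    rw [h1]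
    exact le_min (by linarith [hMC_nonneg (t - 1)]) hB

end MiscoverageCounter

lemma limsup_inv_mul_le_of_le_add_mul {s : ℕ → ℝ} {C r : ℝ} (hs_nonneg : ∀ T, 0 ≤ s T)
    (hs : ∀ T : ℕ, s T ≤ C + T * r) :
    limsup (fun T : ℕ => (1 / (T : ℝ)) * s T) atTop ≤ r := by
  have hbound : Tendsto (fun T : ℕ => (1 / (T : ℝ)) * C + r) atTop (nhds r) := by
    simpa using (tendsto_one_div_atTop_nhds_zero_nat.mul_const C).add_const r
  have hle : ∀ᶠ T : ℕ in atTop, (1 / (T : ℝ)) * s T ≤ (1 / (T : ℝ)) * C + r := by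
    filter_upwards [eventually_ge_atTop 1] with T hT
    have hT_pos : (0 : ℝ) < T := by exact_mod_cast hT
    calc (1 / (T : ℝ)) * s T ≤ (1 / (T : ℝ)) * (C + T * r) := by gcongr; exact hs T
      _ = (1 / (T : ℝ)) * C + r := by field_simp
  calc limsup (fun T : ℕ => (1 / (T : ℝ)) * s T) atTop
      ≤ limsup (fun T : ℕ => (1 / (T : ℝ)) * C + r) atTop :=
        limsup_le_limsup hle
          (isCoboundedUnder_le_of_le atTop fun T => by have := hs_nonneg T; positivity)
          hbound.isBoundedUnder_le
    _ = r := hbound.limsup_eq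

/-- Controlling the truncated miscoverage-counter risk at level `α/(1-α)`
controls the long-run miscoverage rate at level `α/(1-α)`.
`e t ∈ {0,1}` is the miscoverage indicator at time `t ≥ 1`. -/
theorem truncated_mc_risk_controls_miscoverage
    (α B γ m' M' : ℝ)
    (hα0 : 0 < α) (hα1 : α < 1) (hB : 1 / (1 - α) ≤ B) (hγ : 0 < γ)
    (e MC l θ : ℕ → ℝ)
    (he : ∀ t, 1 ≤ t → e t ∈ ({0, 1} : Set ℝ))
    (hMC0 : MC 0 = 0)
    (hMC : ∀ t, 1 ≤ t → MC t = if e t = 1 then MC (t - 1) + 1 else 0)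
    (hl : ∀ t, 1 ≤ t → l t = min (MC t) B)
    (hupd : ∀ t, 1 ≤ t → θ (t + 1) = θ t + γ * (l t - α / (1 - α)))
    (hbdd : ∀ t, 1 ≤ t → θ t ∈ Set.Icc m' M') :
    limsup (fun T : ℕ => (1 / (T : ℝ)) * ∑ t ∈ Finset.Icc 1 T, e t) atTop ≤
      α / (1 - α) := by
  have hB1 : 1 ≤ B := le_trans (by rw [le_div_iff₀ (by linarith)]; linarith) hB
  have he_le_l : ∀ t, 1 ≤ t → e t ≤ l t := fun t ht => by
    rw [hl t ht]
    exact le_min_miscoverage_counter hB1 he hMC0 hMC ht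
  have he_nonneg : ∀ t, 1 ≤ t → 0 ≤ e t := fun t ht => by
    rcases he t ht with h | h <;> simp_all
  refine limsup_inv_mul_le_of_le_add_mul (C := (M' - m') / γ)
    (fun T => sum_nonneg fun t ht => he_nonneg t (mem_Icc.mp ht).1) fun T => ?_
  calc ∑ t ∈ Icc 1 T, e t ≤ ∑ t ∈ Icc 1 T, l t :=
        sum_le_sum fun t ht => he_le_l t (mem_Icc.mp ht).1
    _ ≤ (M' - m') / γ + T * (α / (1 - α)) := sum_le_of_rolling_update_mem_Icc hγ hupd hbdd T
end

section
/- Let γ > 0 and let (θ_t)_{t≥1} satisfy θ_{t+1} = θ_t + γ(l_t − r) with l_t ∈ {0, 1} (the binary miscoverage loss) and r ∈ (0, 1). If θ_t ∈ [m', M'] for all t, then the empirical coverage rate satisfies |(1/T) Σ_{t=1}^T (1 − l_t) − (1 − r)| ≤ (M' − m')/(T γ) for all T ≥ 1, so the long-run coverage rate converges to exactly 1 − r. -/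
open Filter

/-!
Unrolling the update gives `θ T - θ 0 = γ * ∑_{t < T} (l t - r)`, so the empirical coverage
error after `T` steps is exactly `(θ 0 - θ T) / (T γ)`. Boundedness of `θ` in `[m', M']` makes the
numerator at most `M' - m'` in absolute value, and the error decays like `1 / T`.
-/

open Finset

section RollingUpdate

variable {γ r m M : ℝ} {θ l : ℕ → ℝ}

theorem mul_sum_loss_sub_eq_of_rolling_update (hupd : ∀ t, θ (t + 1) = θ t + γ * (l t - r))
    (T : ℕ) : γ * ∑ t ∈ range T, (l t - r) = θ T - θ 0 := by
  rw [mul_sum, ← sum_range_sub θ T]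
  exact sum_congr rfl fun t _ => by rw [hupd t]; ring

theorem coverage_sub_eq_of_rolling_update (hγ : γ ≠ 0)
    (hupd : ∀ t, θ (t + 1) = θ t + γ * (l t - r)) {T : ℕ} (hT : T ≠ 0) :
    (1 / (T : ℝ)) * ∑ t ∈ range T, (1 - l t) - (1 - r) = (θ 0 - θ T) / (T * γ) := by
  have htel := mul_sum_loss_sub_eq_of_rolling_update hupd T
  have hcov : ∑ t ∈ range T, (1 - l t) = T * (1 - r) - ∑ t ∈ range T, (l t - r) := by
    simp only [sum_sub_distrib, sum_const, card_range, nsmul_eq_mul]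
    ring
  rw [hcov]
  field_simp
  linear_combination -htel

theorem abs_coverage_sub_le_of_rolling_update (hγ : 0 < γ)
    (hupd : ∀ t, θ (t + 1) = θ t + γ * (l t - r)) (hbdd : ∀ t, θ t ∈ Set.Icc m M)
    {T : ℕ} (hT : T ≠ 0) :
    |(1 / (T : ℝ)) * ∑ t ∈ range T, (1 - l t) - (1 - r)| ≤ (M - m) / (T * γ) := by
  have hTγ : 0 < (T : ℝ) * γ := by positivity
  rw [coverage_sub_eq_of_rolling_update hγ.ne' hupd hT, abs_div, abs_of_pos hTγ]
  gcongr
  exact Real.dist_le_of_mem_Icc (hbdd 0) (hbdd T)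

theorem tendsto_coverage_of_rolling_update (hγ : 0 < γ)
    (hupd : ∀ t, θ (t + 1) = θ t + γ * (l t - r)) (hbdd : ∀ t, θ t ∈ Set.Icc m M) :
    Tendsto (fun T : ℕ => (1 / (T : ℝ)) * ∑ t ∈ range T, (1 - l t)) atTop (nhds (1 - r)) := by
  have hrate : Tendsto (fun T : ℕ => (M - m) / (T * γ)) atTop (nhds 0) :=
    tendsto_const_nhds.div_atTop (tendsto_natCast_atTop_atTop.atTop_mul_const hγ)
  refine tendsto_iff_norm_sub_tendsto_zero.2 (squeeze_zero_norm' ?_ hrate)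
  filter_upwards [eventually_ne_atTop 0] with T hT
  rw [norm_norm]
  exact abs_coverage_sub_le_of_rolling_update hγ hupd hbdd hT

end RollingUpdate

/-- Indices start at 0, with `θ 0` playing the role of `θ₁`. -/
theorem rolling_rc_aci_coverage_general
    (γ m' M' r : ℝ) (θ l : ℕ → ℝ)
    (hγ : 0 < γ)
    (hupd : ∀ t, θ (t + 1) = θ t + γ * (l t - r))
    (hbdd : ∀ t, θ t ∈ Set.Icc m' M') :
    (∀ T : ℕ, 1 ≤ T →
      |(1 / (T : ℝ)) * ∑ t ∈ Finset.range T, (1 - l t) - (1 - r)| ≤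
        (M' - m') / ((T : ℝ) * γ)) ∧
    Tendsto (fun T : ℕ => (1 / (T : ℝ)) * ∑ t ∈ Finset.range T, (1 - l t))
      atTop (nhds (1 - r)) :=
  ⟨fun _ hT => abs_coverage_sub_le_of_rolling_update hγ hupd hbdd (Nat.one_le_iff_ne_zero.1 hT),
    tendsto_coverage_of_rolling_update hγ hupd hbdd⟩

/-- Specialization of Theorem 1 to the binary miscoverage loss: the
empirical coverage rate converges exactly to `1 - r` (the ACI guarantee).
Indices start at 0, with `θ 0` playing the role of `θ₁`. -/
theorem rolling_rc_aci_coverage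
    (γ m' M' r : ℝ) (θ l : ℕ → ℝ)
    (hγ : 0 < γ)
    (hl : ∀ t, l t ∈ ({0, 1} : Set ℝ))
    (hr : r ∈ Set.Ioo (0 : ℝ) 1)
    (hupd : ∀ t, θ (t + 1) = θ t + γ * (l t - r))
    (hbdd : ∀ t, θ t ∈ Set.Icc m' M') :
    (∀ T : ℕ, 1 ≤ T →
      |(1 / (T : ℝ)) * ∑ t ∈ Finset.range T, (1 - l t) - (1 - r)| ≤
        (M' - m') / ((T : ℝ) * γ)) ∧
    Tendsto (fun T : ℕ => (1 / (T : ℝ)) * ∑ t ∈ Finset.range T, (1 - l t))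
      atTop (nhds (1 - r)) :=
  rolling_rc_aci_coverage_general γ m' M' r θ l hγ hupd hbdd
end

section
/- Let B > 0, γ > 0, m < M, and consider two coupled recursions θ_{t+1} = θ_t + γ(l_t − r) where the losses l_t ∈ [−B,B] may depend arbitrarily (adversarially) on the entire history (θ_1, …, θ_t), subject only to: l_t < r whenever θ_t > M and l_t > r whenever θ_t < m. Then for any such adversarial choice and any initial θ_1 ∈ [m − 2γB, M + 2γB], the empirical risk satisfies sup over all adversarial loss sequences of |(1/T) Σ_{t=1}^T l_t − r| ≤ (M − m + 4γB)/(γT) for every T ≥ 1. -/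
/-!
Summing the update rule telescopes: `γ · ∑_{t<T} (l t - r) = θ T - θ 0`, so the empirical risk
gap is `(θ T - θ 0) / (γ T)`. The boundary conditions push `θ` back towards `[m, M]` whenever it
leaves it, and a single step moves `θ` by at most `2γB`, so `θ` never leaves
`[m - 2γB, M + 2γB]`; hence `|θ T - θ 0| ≤ M - m + 4γB`, whatever the losses.
-/

open Finset Set

section Invariant

variable {α : Type*} [AddCommGroup α] [LinearOrder α] [IsOrderedAddMonoid α]

theorem mem_Icc_of_abs_step_le_of_drift {θ : ℕ → α} {m M s : α}
    (hstep : ∀ t, |θ (t + 1) - θ t| ≤ s)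
    (hup : ∀ t, M < θ t → θ (t + 1) ≤ θ t)
    (hdown : ∀ t, θ t < m → θ t ≤ θ (t + 1))
    (h0 : θ 0 ∈ Icc (m - s) (M + s)) :
    ∀ t, θ t ∈ Icc (m - s) (M + s) := by
  intro t
  induction t with
  | zero => exact h0
  | succ n ih =>
    obtain ⟨hstep_up, hstep_down⟩ := abs_sub_le_iff.mp (hstep n)
    constructor
    · rcases lt_or_ge (θ n) m with hlt | hge
      · exact ih.1.trans (hdown n hlt)
      · calc m - s ≤ θ n - s := sub_le_sub_right hge s
          _ ≤ θ (n + 1) := sub_le_comm.mp hstep_down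
    · rcases lt_or_ge M (θ n) with hlt | hle
      · exact (hup n hlt).trans ih.2
      · calc θ (n + 1) ≤ θ n + s := sub_le_iff_le_add'.mp hstep_up
          _ ≤ M + s := add_le_add_left hle s

end Invariant

theorem abs_mul_sub_le_of_mem_Icc {γ B x y : ℝ} (hγ : 0 ≤ γ)
    (hx : x ∈ Icc (-B) B) (hy : y ∈ Icc (-B) B) :
    |γ * (x - y)| ≤ 2 * γ * B := by
  have hxy : |x - y| ≤ B - -B := Real.dist_le_of_mem_Icc hx hy
  rw [abs_mul, abs_of_nonneg hγ]
  nlinarith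

theorem mul_sum_sub_eq_of_update {θ l : ℕ → ℝ} {γ r : ℝ}
    (hrec : ∀ t, θ (t + 1) = θ t + γ * (l t - r)) (T : ℕ) :
    γ * ∑ t ∈ range T, (l t - r) = θ T - θ 0 := by
  rw [← Finset.sum_range_sub, Finset.mul_sum]
  refine Finset.sum_congr rfl fun t _ => ?_
  rw [hrec t, add_sub_cancel_left]

theorem rolling_rc_adversarial_bound_general
    (B γ m M r : ℝ)
    (hγ : 0 < γ) (hr : r ∈ Set.Icc (-B) B) :
    ∀ θ l : ℕ → ℝ,
      (∀ t, θ (t + 1) = θ t + γ * (l t - r)) →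
      (∀ t, l t ∈ Set.Icc (-B) B) →
      (∀ t, θ t > M → l t < r) →
      (∀ t, θ t < m → l t > r) →
      θ 0 ∈ Set.Icc (m - 2 * γ * B) (M + 2 * γ * B) →
      ∀ T : ℕ, 1 ≤ T →
        |(1 / (T : ℝ)) * ∑ t ∈ Finset.range T, l t - r| ≤
          (M - m + 4 * γ * B) / (γ * (T : ℝ)) := by
  intro θ l hrec hl hup hdown h0 T hT
  have hinv : ∀ t, θ t ∈ Icc (m - 2 * γ * B) (M + 2 * γ * B) := by
    refine mem_Icc_of_abs_step_le_of_drift (fun t => ?_) (fun t ht => ?_) (fun t ht => ?_) h0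
    · rw [hrec t, add_sub_cancel_left]
      exact abs_mul_sub_le_of_mem_Icc hγ.le (hl t) hr
    · rw [hrec t]
      nlinarith [hup t ht]
    · rw [hrec t]
      nlinarith [hdown t ht]
  have hγT : 0 < γ * T := mul_pos hγ (by exact_mod_cast hT)
  have hmean : (1 / (T : ℝ)) * ∑ t ∈ range T, l t - r = (θ T - θ 0) / (γ * T) := by
    rw [← mul_sum_sub_eq_of_update hrec, sum_sub_distrib, sum_const, card_range]
    field_simp
    ring
  calc |(1 / (T : ℝ)) * ∑ t ∈ range T, l t - r| = |θ T - θ 0| / (γ * T) := by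
        rw [hmean, abs_div, abs_of_pos hγT]
    _ ≤ (M + 2 * γ * B - (m - 2 * γ * B)) / (γ * T) := by
        gcongr
        exact Real.dist_le_of_mem_Icc (hinv T) (hinv 0)
    _ = (M - m + 4 * γ * B) / (γ * T) := by ring

/-- Worst-case (adversarial) Rolling RC guarantee: the finite-sample risk
bound holds uniformly over every loss sequence satisfying the boundary
conditions (in particular, losses may depend arbitrarily on the history).
Indices start at 0, with `θ 0` playing the role of `θ₁`. -/
theorem rolling_rc_adversarial_bound
    (B γ m M r : ℝ)
    (hB : 0 < B) (hγ : 0 < γ) (hmM : m < M) (hr : r ∈ Set.Icc (-B) B) :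
    ∀ θ l : ℕ → ℝ,
      (∀ t, θ (t + 1) = θ t + γ * (l t - r)) →
      (∀ t, l t ∈ Set.Icc (-B) B) →
      (∀ t, θ t > M → l t < r) →
      (∀ t, θ t < m → l t > r) →
      θ 0 ∈ Set.Icc (m - 2 * γ * B) (M + 2 * γ * B) →
      ∀ T : ℕ, 1 ≤ T →
        |(1 / (T : ℝ)) * ∑ t ∈ Finset.range T, l t - r| ≤
          (M - m + 4 * γ * B) / (γ * (T : ℝ)) :=
  rolling_rc_adversarial_bound_general B γ m M r hγ hr
end
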